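/- arXiv:2603.22798 — 3 statements merged into one kernel-verified Lean document; each statement's English description precedes it below -/
import Mathlib

section
/- Let N ≥ 1 be a natural number and 0 < δ < π/4. Then for ω ∈ (0, π/2), the condition tan(δ) ≤ tan(ω)^N ≤ tan(δ)⁻¹ holds if and only if ω lies in the closed interval [arctan(tan(δ)^(1/N)), arctan((tan(δ)⁻¹)^(1/N))], and the length of this interval satisfies arctan((tan(δ)⁻¹)^(1/N)) − arctan(tan(δ)^(1/N)) ≤ log(tan(δ)⁻¹)/N. In particular the transition region of the phase amplification function has width O(N⁻¹). -/
open Real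

private lemma arctan_sub_le_log (a b : ℝ) (ha : 0 < a) (hab : a ≤ b) :
    arctan b - arctan a ≤ (Real.log b - Real.log a) / 2 := by
  set f : ℝ → ℝ := fun x => Real.log x / 2 - arctan x with hf
  have hderiv : ∀ x ∈ Set.Ioi (0 : ℝ),
      HasDerivAt f (x⁻¹ / 2 - 1 / (1 + x ^ 2)) x := by
    intro x hx
    exact ((Real.hasDerivAt_log (ne_of_gt hx)).div_const 2).sub (Real.hasDerivAt_arctan x)
  have hmono : MonotoneOn f (Set.Ioi (0 : ℝ)) := by
    apply monotoneOn_of_deriv_nonneg (convex_Ioi 0)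
    · intro x hx
      exact ((hderiv x hx).continuousAt).continuousWithinAt
    · intro x hx
      rw [interior_Ioi] at hx
      exact (hderiv x hx).differentiableAt.differentiableWithinAt
    · intro x hx
      rw [interior_Ioi] at hx
      rw [(hderiv x hx).deriv]
      have hx0 : (0 : ℝ) < x := hx
      have h2x : 2 * x ≤ 1 + x ^ 2 := by nlinarith [sq_nonneg (x - 1)]
      have h1 : 1 / (1 + x ^ 2) ≤ 1 / (2 * x) := by
        apply one_div_le_one_div_of_le (by positivity) h2x
      have h2 : x⁻¹ / 2 = 1 / (2 * x) := by field_simp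
      linarith
  have := hmono (Set.mem_Ioi.mpr ha) (Set.mem_Ioi.mpr (lt_of_lt_of_le ha hab)) hab
  simp only [hf] at this
  linarith

/-- For `N ≥ 1` and `0 < δ < π/4`: for `ω ∈ (0, π/2)`, the condition
`tan δ ≤ tan(ω)^N ≤ (tan δ)⁻¹` holds iff
`ω ∈ [arctan((tan δ)^(1/N)), arctan(((tan δ)⁻¹)^(1/N))]`, and the length of this interval
is at most `log((tan δ)⁻¹)/N`; i.e. the transition region has width `O(1/N)`. -/
theorem phase_amplification_transition_width (N : ℕ) (hN : 1 ≤ N) (δ : ℝ)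
    (hδ0 : 0 < δ) (hδ1 : δ < π / 4) :
    (∀ ω ∈ Set.Ioo (0 : ℝ) (π / 2),
        (Real.tan δ ≤ Real.tan ω ^ N ∧ Real.tan ω ^ N ≤ (Real.tan δ)⁻¹) ↔
          ω ∈ Set.Icc (Real.arctan (Real.tan δ ^ ((1 : ℝ) / N)))
              (Real.arctan (((Real.tan δ)⁻¹) ^ ((1 : ℝ) / N)))) ∧
      Real.arctan (((Real.tan δ)⁻¹) ^ ((1 : ℝ) / N)) -
          Real.arctan (Real.tan δ ^ ((1 : ℝ) / N)) ≤
        Real.log ((Real.tan δ)⁻¹) / N := by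
  have hπ : δ < π / 2 := by linarith [Real.pi_pos]
  have ht0 : 0 < Real.tan δ := Real.tan_pos_of_pos_of_lt_pi_div_two hδ0 hπ
  have ht1 : Real.tan δ < 1 := by
    calc Real.tan δ < Real.tan (π / 4) :=
          Real.tan_lt_tan_of_nonneg_of_lt_pi_div_two hδ0.le
            (by linarith [Real.pi_pos]) hδ1
      _ = 1 := Real.tan_pi_div_four
  have hNpos : (0 : ℝ) < N := by exact_mod_cast hN
  have hNinv : (1 : ℝ) / N = ((N : ℝ))⁻¹ := one_div _
  set a := Real.tan δ ^ ((1 : ℝ) / N) with ha_def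
  set b := ((Real.tan δ)⁻¹) ^ ((1 : ℝ) / N) with hb_def
  have ha0 : 0 < a := Real.rpow_pos_of_pos ht0 _
  have hab : a ≤ b := by
    apply Real.rpow_le_rpow ht0.le _ (by positivity)
    calc Real.tan δ ≤ 1 := ht1.le
      _ ≤ (Real.tan δ)⁻¹ := (one_le_inv₀ ht0).mpr ht1.le
  constructor
  · intro ω hω
    obtain ⟨hω0, hω2⟩ := hω
    have htω : 0 < Real.tan ω := Real.tan_pos_of_pos_of_lt_pi_div_two hω0 hω2
    have harc : Real.arctan (Real.tan ω) = ω :=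
      Real.arctan_tan (by linarith [Real.pi_pos]) hω2
    constructor
    · rintro ⟨h1, h2⟩
      constructor
      · rw [← harc]
        apply Real.arctan_strictMono.monotone
        rw [ha_def, hNinv, Real.rpow_inv_le_iff_of_pos ht0.le htω.le hNpos,
          Real.rpow_natCast]
        exact h1
      · rw [← harc]
        apply Real.arctan_strictMono.monotone
        rw [hb_def, hNinv, Real.le_rpow_inv_iff_of_pos htω.le (by positivity) hNpos,
          Real.rpow_natCast]
        exact h2
    · rintro ⟨h1, h2⟩
      rw [← harc] at h1 h2
      replace h1 := Real.arctan_strictMono.le_iff_le.mp h1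
      replace h2 := Real.arctan_strictMono.le_iff_le.mp h2
      constructor
      · rw [ha_def, hNinv, Real.rpow_inv_le_iff_of_pos ht0.le htω.le hNpos,
          Real.rpow_natCast] at h1
        exact h1
      · rw [hb_def, hNinv, Real.le_rpow_inv_iff_of_pos htω.le (by positivity) hNpos,
          Real.rpow_natCast] at h2
        exact h2
  · have key := arctan_sub_le_log a b ha0 hab
    have hla : Real.log a = (1 / N) * Real.log (Real.tan δ) := Real.log_rpow ht0 _
    have hlb : Real.log b = (1 / N) * Real.log ((Real.tan δ)⁻¹) :=
      Real.log_rpow (by positivity) _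
    have hinv : Real.log ((Real.tan δ)⁻¹) = -Real.log (Real.tan δ) := Real.log_inv _
    have : (Real.log b - Real.log a) / 2 = Real.log ((Real.tan δ)⁻¹) / N := by
      rw [hla, hlb, hinv]; field_simp; ring
    linarith
end

section
/- Let N ≥ 1 be a natural number and let ω be a real number with 0 < ω ≤ 1/(2N). Then |arctan(tan(ω)^N) − ω^N| ≤ N² · ω^(N+2); that is, in the small-angle regime arctan(tan^N ω) = ω^N (1 + O(N²ω²)). -/
open Real

set_option maxHeartbeats 800000

lemma aux_arctan_le_self {x : ℝ} (hx : 0 ≤ x) : Real.arctan x ≤ x := by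
  rcases eq_or_lt_of_le hx with h | h
  · simp [← h]
  rcases lt_or_ge x (π/2) with hlt | hge
  · calc Real.arctan x ≤ Real.arctan (Real.tan x) :=
        Real.arctan_strictMono.monotone (Real.lt_tan h hlt).le
      _ = x := Real.arctan_tan (by linarith [Real.pi_pos]) hlt
  · exact le_trans (Real.arctan_lt_pi_div_two x).le hge

lemma aux_arctan_lb {x : ℝ} (hx : 0 ≤ x) : x - x^3/3 ≤ Real.arctan x := by
  have hdiff : Differentiable ℝ (fun y : ℝ => Real.arctan y - y + y^3/3) := by
    apply Differentiable.add
    · exact Real.differentiable_arctan.sub differentiable_id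
    · exact (differentiable_pow 3).div_const 3
  have key : MonotoneOn (fun y : ℝ => Real.arctan y - y + y^3/3) (Set.Ici 0) := by
    apply monotoneOn_of_deriv_nonneg (convex_Ici 0) hdiff.continuous.continuousOn
    · intro y hy
      exact (hdiff y).differentiableWithinAt
    · intro y hy
      have hd : HasDerivAt (fun y : ℝ => Real.arctan y - y + y^3/3)
          (1/(1+y^2) - 1 + 3*y^2/3) y :=
        ((Real.hasDerivAt_arctan y).sub (hasDerivAt_id y)).add
          ((hasDerivAt_pow 3 y).div_const 3)
      rw [hd.deriv]
      have h1 : (0:ℝ) < 1 + y^2 := by positivity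
      have h2 : (1:ℝ) - y^2 ≤ 1/(1+y^2) := by
        rw [le_div_iff₀ h1]; nlinarith [sq_nonneg (y^2)]
      nlinarith
  have := key (Set.self_mem_Ici) (Set.mem_Ici.mpr hx) hx
  simp only [Real.arctan_zero] at this
  norm_num at this
  linarith

/-- For `N ≥ 1` and `0 < ω ≤ 1/(2N)`, the small-angle expansion
`|arctan(tan(ω)^N) − ω^N| ≤ N² · ω^(N+2)` holds, i.e.
`arctan(tan^N ω) = ω^N (1 + O(N²ω²))`. -/
theorem phase_amplification_small_angle (N : ℕ) (hN : 1 ≤ N) (ω : ℝ)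
    (h1 : 0 < ω) (h2 : ω ≤ 1 / (2 * N)) :
    |Real.arctan (Real.tan ω ^ N) - ω ^ N| ≤ (N : ℝ) ^ 2 * ω ^ (N + 2) := by
  have hN1 : (1:ℝ) ≤ N := by exact_mod_cast hN
  have hNpos : (0:ℝ) < N := by linarith
  have hNω : (N:ℝ) * ω ≤ 1/2 := by
    rw [le_div_iff₀ (by positivity)] at h2
    nlinarith
  have hω2 : ω ≤ 1/2 := by nlinarith
  have hπ : ω < π/2 := by nlinarith [Real.pi_gt_three]
  -- N = 1 case: arctan(tan ω) = ω
  rcases eq_or_lt_of_le hN with h | hN2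
  · rw [← h]
    simp only [pow_one]
    rw [Real.arctan_tan (by linarith [Real.pi_pos]) hπ]
    simp
    positivity
  have hN2' : (2:ℝ) ≤ N := by exact_mod_cast hN2
  set t := Real.tan ω with ht
  have hωt : ω < t := Real.lt_tan h1 hπ
  have ht0 : 0 < t := lt_trans h1 hωt
  -- upper bound on tan
  have hcos : 1 - ω^2/2 ≤ Real.cos ω := Real.one_sub_sq_div_two_le_cos
  have hcos0 : (0:ℝ) < 1 - ω^2/2 := by nlinarith
  have hsin : Real.sin ω < ω := Real.sin_lt h1
  have hcosω : (0:ℝ) < Real.cos ω := by nlinarith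
  have htub : t ≤ ω * (1 + ω^2) := by
    have htc : t * Real.cos ω = Real.sin ω := Real.tan_mul_cos hcosω.ne'
    have hA : t * (1 - ω^2/2) ≤ ω := by nlinarith [mul_le_mul_of_nonneg_left hcos ht0.le]
    have hB : ω ≤ ω * (1 + ω^2) * (1 - ω^2/2) := by
      nlinarith [mul_nonneg (mul_nonneg (mul_nonneg h1.le h1.le) h1.le)
        (by nlinarith : (0:ℝ) ≤ 1 - ω^2)]
    exact le_of_mul_le_mul_right (by linarith) hcos0
  -- t^N ≤ ω^N + 2N ω^(N+2)
  have hexp1 : (1 + ω^2 : ℝ) ≤ Real.exp (ω^2) := by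
    have := Real.add_one_le_exp (ω^2); linarith
  have hy : (N:ℝ) * ω^2 ≤ 1/2 := by nlinarith
  have hexp2 : Real.exp ((N:ℝ) * ω^2) ≤ 1 + 2 * ((N:ℝ) * ω^2) := by
    set y := (N:ℝ) * ω^2 with hy'
    have hy0 : 0 ≤ y := by positivity
    have hne : Real.exp (-y) * Real.exp y = 1 := by rw [← Real.exp_add]; simp
    have hlb : 1 - y ≤ Real.exp (-y) := by
      have := Real.add_one_le_exp (-y); linarith
    have hpos : 0 < Real.exp y := Real.exp_pos _
    have h3 : (1 - y) * Real.exp y ≤ 1 := by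
      calc (1 - y) * Real.exp y ≤ Real.exp (-y) * Real.exp y :=
            mul_le_mul_of_nonneg_right hlb hpos.le
        _ = 1 := hne
    nlinarith [mul_nonneg hy0 (sub_nonneg.2 hy)]
  have hpowN : (1 + ω^2 : ℝ)^N ≤ 1 + 2 * ((N:ℝ) * ω^2) := by
    calc (1 + ω^2 : ℝ)^N ≤ (Real.exp (ω^2))^N :=
          pow_le_pow_left₀ (by positivity) hexp1 N
      _ = Real.exp ((N:ℝ) * ω^2) := by rw [← Real.exp_nat_mul]
      _ ≤ 1 + 2 * ((N:ℝ) * ω^2) := hexp2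
  have htN : t^N ≤ ω^N + 2 * (N:ℝ) * ω^(N+2) := by
    calc t^N ≤ (ω * (1 + ω^2))^N := pow_le_pow_left₀ ht0.le htub N
      _ = ω^N * (1 + ω^2)^N := mul_pow _ _ _
      _ ≤ ω^N * (1 + 2 * ((N:ℝ) * ω^2)) := by
          apply mul_le_mul_of_nonneg_left hpowN (by positivity)
      _ = ω^N + 2 * (N:ℝ) * ω^(N+2) := by ring
  -- upper
  have hup : Real.arctan (t^N) - ω^N ≤ (N:ℝ)^2 * ω^(N+2) := by
    have := aux_arctan_le_self (pow_nonneg ht0.le N)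
    have h2N : 2 * (N:ℝ) * ω^(N+2) ≤ (N:ℝ)^2 * ω^(N+2) := by
      apply mul_le_mul_of_nonneg_right _ (by positivity)
      nlinarith
    linarith
  -- lower
  have hlow : ω^N - Real.arctan (t^N) ≤ (N:ℝ)^2 * ω^(N+2) := by
    have hmono : Real.arctan (ω^N) ≤ Real.arctan (t^N) :=
      Real.arctan_strictMono.monotone (pow_le_pow_left₀ h1.le hωt.le N)
    have hlb := aux_arctan_lb (pow_nonneg h1.le N)
    have hp : (ω^N)^3 = ω^(3*N) := by rw [← pow_mul, mul_comm]
    have hple : ω^(3*N) ≤ ω^(N+2) :=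
      pow_le_pow_of_le_one h1.le (by linarith) (by omega)
    have h1le : ω^(N+2) ≤ (N:ℝ)^2 * ω^(N+2) :=
      le_mul_of_one_le_left (pow_pos h1 (N+2)).le (by nlinarith)
    rw [hp] at hlb
    linarith
  rw [abs_le]
  constructor <;> linarith
end

section
/- Let v ≥ 0 and a be real numbers, and let γ denote the centered Gaussian probability measure on ℝ with variance v. Then ∫ cos²(a + s) dγ(s) = (1 + cos(2a) · e^{−2v}) / 2. In particular, for the GHZ parity measurement with a = Nω and v = Nσ_ε², the noise-averaged probability of outcome +1 is (1 + cos(2Nω) e^{−2Nσ_ε²})/2. -/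
open MeasureTheory ProbabilityTheory Real Complex

/- The Gaussian average of a shifted cosine is the real part of a rotated characteristic function,
`charFun γ t = exp (-v t² / 2)`; with `cos² x = (1 + cos 2x) / 2` this gives the damping `e^{-2v}`. -/

lemma integral_cos_add_mul_eq_re_charFun (μ : Measure ℝ) [IsFiniteMeasure μ] (b t : ℝ) :
    ∫ x, Real.cos (b + t * x) ∂μ = (cexp (b * I) * charFun μ t).re := by
  have hint : Integrable (fun x : ℝ ↦ cexp (↑(b + t * x) * I)) μ :=
    Integrable.of_bound (by fun_prop) 1
      (ae_of_all _ fun x ↦ (Complex.norm_exp_ofReal_mul_I _).le)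
  have hrot : ∀ x : ℝ, cexp (b * I) * cexp (t * x * I) = cexp (↑(b + t * x) * I) := fun x ↦ by
    rw [← Complex.exp_add]; push_cast; ring_nf
  simp_rw [charFun_apply_real, ← integral_const_mul, hrot, ← RCLike.re_to_complex,
    ← integral_re hint, RCLike.re_to_complex, Complex.exp_ofReal_mul_I_re]

lemma integral_cos_add_mul_gaussianReal (m : ℝ) (v : NNReal) (b t : ℝ) :
    ∫ x, Real.cos (b + t * x) ∂(gaussianReal m v)
      = Real.cos (b + t * m) * Real.exp (-(v * t ^ 2 / 2)) := by
  rw [integral_cos_add_mul_eq_re_charFun, charFun_gaussianReal, ← Complex.exp_add]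
  have hexponent : (b : ℂ) * I + (t * m * I - v * t ^ 2 / 2)
      = ((-(v * t ^ 2 / 2) : ℝ) : ℂ) + ((b + t * m : ℝ) : ℂ) * I := by push_cast; ring
  rw [hexponent, Complex.exp_add, ← Complex.ofReal_exp, Complex.re_ofReal_mul,
    Complex.exp_ofReal_mul_I_re, mul_comm]

/-- For `v ≥ 0` and `a` real, integrating against the centered Gaussian
measure `γ` on `ℝ` with variance `v` gives
`∫ cos²(a + s) dγ(s) = (1 + cos(2a) · e^{−2v}) / 2`. In particular, for the GHZ parity
measurement with `a = Nω` and `v = Nσ_ε²`, the noise-averaged probability of outcome `+1`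
is `(1 + cos(2Nω) e^{−2Nσ_ε²})/2`. -/
theorem gaussian_average_cos_sq (v : ℝ) (hv : 0 ≤ v) (a : ℝ) :
    ∫ s, (Real.cos (a + s)) ^ 2 ∂(gaussianReal 0 v.toNNReal)
      = (1 + Real.cos (2 * a) * Real.exp (-2 * v)) / 2 := by
  have hint : Integrable (fun s : ℝ ↦ Real.cos (2 * a + 2 * s)) (gaussianReal 0 v.toNNReal) :=
    Integrable.of_bound (by fun_prop) 1 (ae_of_all _ fun s ↦ by
      simpa using Real.abs_cos_le_one _)
  have hcos_sq : ∀ s, Real.cos (a + s) ^ 2 = (1 + Real.cos (2 * a + 2 * s)) / 2 := fun s ↦ by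
    rw [Real.cos_sq, mul_add, add_div, one_div]
  simp_rw [hcos_sq]
  rw [integral_div, integral_add (integrable_const 1) hint, integral_const, probReal_univ,
    integral_cos_add_mul_gaussianReal, Real.coe_toNNReal v hv]
  ring_nf
end
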